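/- arXiv:1905.13554 — 3 statements merged into one kernel-verified Lean document; each statement's English description precedes it below -/
import Mathlib

section
/- Let Ψ: U × V → ℝ, d: V × V → ℝ≥0, Σ ⊆ U, Γ ⊆ V, and Ψ_ρ(u,v,ṽ) = Ψ(u,v) + ρ d(v,ṽ). Let (ρᵏ) be a sequence of positive reals with ρᵏ → ∞, ε ≥ 0, and let (uᵏ, vᵏ, ṽᵏ) ∈ Σ × V × Γ be a sequence such that for every k: Ψ(u,v) + ρᵏ d(v, ṽᵏ) ≥ Ψ(uᵏ, vᵏ) + ρᵏ d(vᵏ, ṽᵏ) − ε for all (u,v) ∈ Σ × V, and Ψ(uᵏ, vᵏ) + ρᵏ d(vᵏ, ṽ) ≥ Ψ(uᵏ, vᵏ) + ρᵏ d(vᵏ, ṽᵏ) − ε for all ṽ ∈ Γ. Assume d is continuous, Ψ is bounded on the set of iterates together with any fixed comparison point, and (vᵏ, ṽᵏ) → (v*, ṽ*) in a topology in which d is continuous. Then (v*, ṽ*) is a partial minimum of the feasibility measure χ(v, ṽ) = d(v, ṽ): d(v, ṽ*) ≥ d(v*, ṽ*) for all v ∈ V such that (u, v) ∈ Σ ×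 V for some u, and d(v*, ṽ) ≥ d(v*, ṽ*) for all ṽ ∈ Γ. -/
open Filter Topology

/-- Dividing by the penalty weight `ρ i → ∞` makes the bounded slack `C` vanish in the limit. -/
theorem le_of_tendsto_of_mul_le_mul_add {ι : Type*} {l : Filter ι} [l.NeBot] {ρ a b : ι → ℝ}
    {A B C : ℝ} (hρ : Tendsto ρ l atTop) (ha : Tendsto a l (𝓝 A)) (hb : Tendsto b l (𝓝 B))
    (h : ∀ i, ρ i * b i ≤ ρ i * a i + C) : B ≤ A := by
  have hslack : Tendsto (fun i => -C / ρ i) l (𝓝 0) := tendsto_const_nhds.div_atTop hρ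
  have hgap : ∀ᶠ i in l, -C / ρ i ≤ a i - b i := by
    filter_upwards [hρ.eventually_gt_atTop 0] with i hρi
    rw [div_le_iff₀ hρi]
    linarith [h i]
  linarith [le_of_tendsto_of_tendsto hslack (ha.sub hb) hgap]

theorem stmt_4_general {U V : Type*} [MetricSpace V] (Ψ : U → V → ℝ)
    (Sg : Set U) (Γ : Set V)
    (ρ : ℕ → ℝ) (hρ : Tendsto ρ atTop atTop)
    (ε : ℝ)
    (uu : ℕ → U) (vv : ℕ → V) (tv : ℕ → V)
    (h1 : ∀ k, ∀ u ∈ Sg, ∀ v : V,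
      Ψ u v + ρ k * dist v (tv k) ≥ Ψ (uu k) (vv k) + ρ k * dist (vv k) (tv k) - ε)
    (h2 : ∀ k, ∀ vtil ∈ Γ,
      Ψ (uu k) (vv k) + ρ k * dist (vv k) vtil ≥
        Ψ (uu k) (vv k) + ρ k * dist (vv k) (tv k) - ε)
    (hbound : ∃ C : ℝ, ∀ k, |Ψ (uu k) (vv k)| ≤ C)
    (vstar tvstar : V)
    (hvconv : Tendsto vv atTop (nhds vstar)) (htconv : Tendsto tv atTop (nhds tvstar)) :
    (∀ v : V, (∃ u, u ∈ Sg) → dist v tvstar ≥ dist vstar tvstar) ∧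
    (∀ vtil ∈ Γ, dist vstar vtil ≥ dist vstar tvstar) := by
  obtain ⟨C, hC⟩ := hbound
  constructor
  · rintro v ⟨u, hu⟩
    refine le_of_tendsto_of_mul_le_mul_add (C := Ψ u v + C + ε) hρ
      (tendsto_const_nhds.dist htconv) (hvconv.dist htconv) fun k => ?_
    linarith [h1 k u hu v, neg_abs_le (Ψ (uu k) (vv k)), hC k]
  · intro vtil hvtil
    exact le_of_tendsto_of_mul_le_mul_add (C := ε) hρ (hvconv.dist tendsto_const_nhds)
      (hvconv.dist htconv) fun k => by linarith [h2 k vtil hvtil]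

/-- Theorem 4: a limit of penalty-ε-ADM iterates with ρᵏ → ∞ is a partial
minimum of the feasibility measure χ(v, ṽ) = d(v, ṽ). -/
theorem stmt_4 {U V : Type*} [MetricSpace V] (Ψ : U → V → ℝ)
    (Sg : Set U) (Γ : Set V)
    (ρ : ℕ → ℝ) (hρpos : ∀ k, 0 < ρ k) (hρ : Tendsto ρ atTop atTop)
    (ε : ℝ) (hε : 0 ≤ ε)
    (uu : ℕ → U) (vv : ℕ → V) (tv : ℕ → V)
    (hmemu : ∀ k, uu k ∈ Sg) (hmemt : ∀ k, tv k ∈ Γ)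
    (h1 : ∀ k, ∀ u ∈ Sg, ∀ v : V,
      Ψ u v + ρ k * dist v (tv k) ≥ Ψ (uu k) (vv k) + ρ k * dist (vv k) (tv k) - ε)
    (h2 : ∀ k, ∀ vtil ∈ Γ,
      Ψ (uu k) (vv k) + ρ k * dist (vv k) vtil ≥
        Ψ (uu k) (vv k) + ρ k * dist (vv k) (tv k) - ε)
    (hbound : ∃ C : ℝ, ∀ k, |Ψ (uu k) (vv k)| ≤ C)
    (vstar tvstar : V)
    (hvconv : Tendsto vv atTop (nhds vstar)) (htconv : Tendsto tv atTop (nhds tvstar)) :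
    (∀ v : V, (∃ u, u ∈ Sg) → dist v tvstar ≥ dist vstar tvstar) ∧
    (∀ vtil ∈ Γ, dist vstar vtil ≥ dist vstar tvstar) :=
  stmt_4_general Ψ Sg Γ ρ hρ ε uu vv tv h1 h2 hbound vstar tvstar hvconv htconv
end

section
/- Let w: [0,T] → [0,1]^{M̃} be measurable with Σᵢ wᵢ(t) = 1 almost everywhere, and let wⁿ: [0,T] → {0,1}^{M̃} with Σᵢ wⁿᵢ(t) = 1 be binary approximations satisfying the integral-deviation bound sup_{t∈[0,T]} ‖∫₀ᵗ (w(s) − wⁿ(s)) ds‖_∞ ≤ δₙ with δₙ → 0. Let g: [0,T] → ℝ^{M̃} be continuously differentiable and define z(t) = ∫₀ᵗ Σᵢ wᵢ(s) gᵢ(s) ds and zₙ(t) = ∫₀ᵗ Σᵢ wⁿᵢ(s) gᵢ(s) ds. Then ‖z − zₙ‖_{C([0,T])} ≤ δₙ·(‖g‖_∞ + T·‖g'‖_∞)·M̃ → 0 as n → ∞. -/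
open Filter MeasureTheory Set intervalIntegral

/-! With `d = w - wⁿ` and `G t = ∫₀ᵗ d`, integration by parts gives
`∫₀ᵗ dᵢ gᵢ = Gᵢ t * gᵢ t - ∫₀ᵗ Gᵢ gᵢ'`, so only the accumulated deviation `G`, which is uniformly
at most `δₙ`, enters the estimate; each coordinate then contributes at most `δₙ (‖g‖ + T ‖g'‖)`.
Since `G` is merely absolutely continuous (differentiable only almost everywhere), the
integration by parts is the one for absolutely continuous functions. -/

section

variable {ι : Type*} [Fintype ι] {a b : ℝ}

theorem intervalIntegrable_of_norm_le {E : Type*} [NormedAddCommGroup E] {f : ℝ → E} {C : ℝ}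
    (hf : AEStronglyMeasurable f volume) (hC : ∀ x ∈ uIcc a b, ‖f x‖ ≤ C) :
    IntervalIntegrable f volume a b :=
  (intervalIntegrable_const (c := C)).mono_fun' hf.restrict
    (ae_restrict_of_forall_mem measurableSet_uIoc fun x hx => hC x (uIoc_subset_uIcc hx))

theorem intervalIntegrable_of_forall_mem_Icc {f : ℝ → ι → ℝ}
    (hf : Measurable f) (h01 : ∀ x ∈ uIcc a b, ∀ i, f x i ∈ Icc (0 : ℝ) 1) :
    IntervalIntegrable f volume a b :=
  intervalIntegrable_of_norm_le hf.aestronglyMeasurable fun x hx =>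
    (pi_norm_le_iff_of_nonneg zero_le_one).2 fun i =>
      abs_le.2 ⟨by linarith [(h01 x hx i).1], (h01 x hx i).2⟩

theorem IntervalIntegrable.eval {E : ι → Type*} [∀ i, NormedAddCommGroup (E i)]
    {f : ℝ → ∀ i, E i} {μ : Measure ℝ} (hf : IntervalIntegrable f μ a b) (i : ι) :
    IntervalIntegrable (fun x => f x i) μ a b :=
  ⟨hf.1.eval i, hf.2.eval i⟩

theorem eval_intervalIntegral {f : ℝ → ι → ℝ} (hf : IntervalIntegrable f volume a b) (i : ι) :
    (∫ x in a..b, f x) i = ∫ x in a..b, f x i :=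
  ((ContinuousLinearMap.proj (R := ℝ) (φ := fun _ : ι => ℝ) i).intervalIntegral_comp_comm hf).symm

theorem IntervalIntegrable.sum_apply_mul {v γ : ℝ → ι → ℝ} (hv : IntervalIntegrable v volume a b)
    (hγ : Continuous γ) : IntervalIntegrable (fun x => ∑ i, v x i * γ x i) volume a b := by
  have hγi : ∀ i, Continuous fun x => γ x i := fun i => by fun_prop
  simpa only [Finset.sum_fn] using IntervalIntegrable.sum (f := fun i x => v x i * γ x i)
    Finset.univ fun i _ => (hv.eval i).mul_continuousOn (hγi i).continuousOn

theorem integral_mul_eq_sub_integral_primitive_mul_deriv {d γ : ℝ → ℝ}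
    (hd : IntervalIntegrable d volume a b) (hγ : ContDiffOn ℝ 1 γ (uIcc a b)) :
    ∫ x in a..b, d x * γ x =
      (∫ x in a..b, d x) * γ b - ∫ x in a..b, (∫ y in a..x, d y) * deriv γ x := by
  have hparts := (hd.absolutelyContinuousOnInterval_intervalIntegral left_mem_uIcc)
    |>.integral_mul_deriv_eq_deriv_mul hγ.absolutelyContinuousOnInterval
  have hderiv : ∫ x in a..b, deriv (fun x => ∫ y in a..x, d y) x * γ x =
      ∫ x in a..b, d x * γ x := by
    refine integral_congr_ae ?_
    filter_upwards [hd.ae_hasDerivAt_integral] with x hx hxab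
    rw [(hx (uIoc_subset_uIcc hxab) a left_mem_uIcc).deriv]
  rw [hparts, hderiv, integral_same, zero_mul]
  ring

theorem abs_integral_mul_le_of_abs_primitive_le {d γ : ℝ → ℝ} {δ C C' : ℝ} (hab : a ≤ b)
    (hd : IntervalIntegrable d volume a b) (hγ : ContDiffOn ℝ 1 γ (Icc a b))
    (hdδ : ∀ x ∈ Icc a b, |∫ y in a..x, d y| ≤ δ) (hγC : ∀ x ∈ Icc a b, |γ x| ≤ C)
    (hγC' : ∀ x ∈ Icc a b, |deriv γ x| ≤ C') :
    |∫ x in a..b, d x * γ x| ≤ δ * (C + (b - a) * C') := by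
  have hb : b ∈ Icc a b := right_mem_Icc.2 hab
  have hδ : 0 ≤ δ := (abs_nonneg _).trans (hdδ b hb)
  have hrest : |∫ x in a..b, (∫ y in a..x, d y) * deriv γ x| ≤ δ * C' * (b - a) := by
    have := norm_integral_le_of_norm_le_const (a := a) (b := b)
      (f := fun x => (∫ y in a..x, d y) * deriv γ x) (C := δ * C') fun x hx => by
        have hx' : x ∈ Icc a b := Ioc_subset_Icc_self (uIoc_of_le hab ▸ hx)
        rw [Real.norm_eq_abs, abs_mul]
        exact mul_le_mul (hdδ x hx') (hγC' x hx') (abs_nonneg _) hδ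
    rwa [Real.norm_eq_abs, abs_of_nonneg (sub_nonneg.2 hab)] at this
  rw [integral_mul_eq_sub_integral_primitive_mul_deriv hd (uIcc_of_le hab ▸ hγ)]
  calc _ ≤ |(∫ x in a..b, d x) * γ b| + |∫ x in a..b, (∫ y in a..x, d y) * deriv γ x| :=
        abs_sub _ _
    _ ≤ δ * C + δ * C' * (b - a) := by
        rw [abs_mul]
        gcongr
        · exact hdδ b hb
        · exact hγC b hb
    _ = δ * (C + (b - a) * C') := by ring

theorem abs_integral_sum_mul_le_of_norm_primitive_le {v γ : ℝ → ι → ℝ} {δ C C' : ℝ} (hab : a ≤ b)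
    (hv : IntervalIntegrable v volume a b) (hγ : ContDiff ℝ 1 γ)
    (hvδ : ∀ x ∈ Icc a b, ‖∫ y in a..x, v y‖ ≤ δ) (hγC : ∀ x ∈ Icc a b, ‖γ x‖ ≤ C)
    (hγC' : ∀ x ∈ Icc a b, ‖deriv γ x‖ ≤ C') :
    |∫ x in a..b, ∑ i, v x i * γ x i| ≤ δ * (C + (b - a) * C') * Fintype.card ι := by
  have hγi : ∀ i, ContDiff ℝ 1 (fun x => γ x i) := contDiff_pi.1 hγ
  have hcoord : ∀ i, |∫ x in a..b, v x i * γ x i| ≤ δ * (C + (b - a) * C') := fun i =>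
    abs_integral_mul_le_of_abs_primitive_le hab (hv.eval i) (hγi i).contDiffOn
      (fun x hx => by
        rw [← eval_intervalIntegral (hv.mono_set (uIcc_subset_uIcc_left (uIcc_of_le hab ▸ hx)))]
        exact (norm_le_pi_norm _ i).trans (hvδ x hx))
      (fun x hx => (norm_le_pi_norm (γ x) i).trans (hγC x hx))
      (fun x hx => by
        rw [← Real.norm_eq_abs,
          ← congrFun (deriv_pi fun j => (hγi j).differentiable one_ne_zero x) i]
        exact (norm_le_pi_norm (deriv γ x) i).trans (hγC' x hx))
  rw [intervalIntegral.integral_finsetSum fun i _ =>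
    (hv.eval i).mul_continuousOn (hγi i).continuous.continuousOn]
  calc _ ≤ ∑ i, |∫ x in a..b, v x i * γ x i| := Finset.abs_sum_le_sum_abs _ _
    _ ≤ ∑ _i : ι, δ * (C + (b - a) * C') := Finset.sum_le_sum fun i _ => hcoord i
    _ = δ * (C + (b - a) * C') * Fintype.card ι := by simp [mul_comm]

end

theorem stmt_17_general (T : ℝ) (Mt : ℕ)
    (w : ℝ → Fin Mt → ℝ) (hw_meas : Measurable w)
    (hw_mem : ∀ t ∈ Set.Icc (0 : ℝ) T, ∀ i, w t i ∈ Set.Icc (0 : ℝ) 1)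
    (wn : ℕ → ℝ → Fin Mt → ℝ) (hwn_meas : ∀ n, Measurable (wn n))
    (hwn_mem : ∀ n, ∀ t ∈ Set.Icc (0 : ℝ) T, ∀ i, wn n t i ∈ ({0, 1} : Set ℝ))
    (δ : ℕ → ℝ) (hδ : Tendsto δ atTop (nhds 0))
    (hdev : ∀ n, ∀ t ∈ Set.Icc (0 : ℝ) T,
      ‖∫ s in (0 : ℝ)..t, (w s - wn n s)‖ ≤ δ n)
    (g : ℝ → Fin Mt → ℝ) (hg : ContDiff ℝ 1 g)
    (Cg Cg' : ℝ)
    (hCg : ∀ t ∈ Set.Icc (0 : ℝ) T, ‖g t‖ ≤ Cg)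
    (hCg' : ∀ t ∈ Set.Icc (0 : ℝ) T, ‖deriv g t‖ ≤ Cg')
    :
    (∀ n, ∀ t ∈ Set.Icc (0 : ℝ) T,
      |(∫ s in (0 : ℝ)..t, ∑ i, w s i * g s i) -
        (∫ s in (0 : ℝ)..t, ∑ i, wn n s i * g s i)| ≤ δ n * (Cg + T * Cg') * Mt) ∧
    Tendsto (fun n => δ n * (Cg + T * Cg') * (Mt : ℝ)) atTop (nhds 0) := by
  refine ⟨fun n t ht => ?_, by simpa [mul_assoc] using hδ.mul_const ((Cg + T * Cg') * Mt)⟩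
  have hsub : uIcc 0 t ⊆ Icc 0 T := uIcc_of_le ht.1 ▸ Icc_subset_Icc_right ht.2
  have hw : IntervalIntegrable w volume 0 t :=
    intervalIntegrable_of_forall_mem_Icc hw_meas fun x hx => hw_mem x (hsub hx)
  have hwn : IntervalIntegrable (wn n) volume 0 t :=
    intervalIntegrable_of_forall_mem_Icc (hwn_meas n) fun x hx i => by
      rcases hwn_mem n x (hsub hx) i with h | h <;> simp_all
  have hδn : 0 ≤ δ n := (norm_nonneg _).trans (hdev n t ht)
  have hCg'0 : 0 ≤ Cg' := (norm_nonneg _).trans (hCg' t ht)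
  calc _ = |∫ s in (0 : ℝ)..t, ∑ i, (w s - wn n s) i * g s i| := by
        rw [← integral_sub (hw.sum_apply_mul hg.continuous) (hwn.sum_apply_mul hg.continuous)]
        simp only [← Finset.sum_sub_distrib, ← sub_mul, Pi.sub_apply]
    _ ≤ δ n * (Cg + (t - 0) * Cg') * Mt := by
        simpa using abs_integral_sum_mul_le_of_norm_primitive_le ht.1 (hw.sub hwn) hg
          (fun x hx => hdev n x (hsub (Icc_subset_uIcc hx)))
          (fun x hx => hCg x (hsub (Icc_subset_uIcc hx)))
          (fun x hx => hCg' x (hsub (Icc_subset_uIcc hx)))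
    _ ≤ δ n * (Cg + T * Cg') * Mt := by gcongr; linarith [ht.2]

/-- sum-up rounding convergence estimate: if the accumulated integrals of
binary multipliers wⁿ approximate those of relaxed multipliers w uniformly with rate δₙ → 0,
then the corresponding integrated states converge uniformly with the explicit bound
δₙ (‖g‖_∞ + T ‖g'‖_∞) M̃. -/
theorem stmt_17 (T : ℝ) (hT : 0 < T) (Mt : ℕ) (hMt : 0 < Mt)
    (w : ℝ → Fin Mt → ℝ) (hw_meas : Measurable w)
    (hw_mem : ∀ t ∈ Set.Icc (0 : ℝ) T, ∀ i, w t i ∈ Set.Icc (0 : ℝ) 1)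
    (hw_sum : ∀ᵐ t ∂(volume.restrict (Set.Icc (0 : ℝ) T)), ∑ i, w t i = 1)
    (wn : ℕ → ℝ → Fin Mt → ℝ) (hwn_meas : ∀ n, Measurable (wn n))
    (hwn_mem : ∀ n, ∀ t ∈ Set.Icc (0 : ℝ) T, ∀ i, wn n t i ∈ ({0, 1} : Set ℝ))
    (hwn_sum : ∀ n, ∀ t ∈ Set.Icc (0 : ℝ) T, ∑ i, wn n t i = 1)
    (δ : ℕ → ℝ) (hδ_nonneg : ∀ n, 0 ≤ δ n) (hδ : Tendsto δ atTop (nhds 0))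
    (hdev : ∀ n, ∀ t ∈ Set.Icc (0 : ℝ) T,
      ‖∫ s in (0 : ℝ)..t, (w s - wn n s)‖ ≤ δ n)
    (g : ℝ → Fin Mt → ℝ) (hg : ContDiff ℝ 1 g)
    (Cg Cg' : ℝ)
    (hCg : ∀ t ∈ Set.Icc (0 : ℝ) T, ‖g t‖ ≤ Cg)
    (hCg' : ∀ t ∈ Set.Icc (0 : ℝ) T, ‖deriv g t‖ ≤ Cg')
    :
    (∀ n, ∀ t ∈ Set.Icc (0 : ℝ) T,
      |(∫ s in (0 : ℝ)..t, ∑ i, w s i * g s i) -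
        (∫ s in (0 : ℝ)..t, ∑ i, wn n s i * g s i)| ≤ δ n * (Cg + T * Cg') * Mt) ∧
    Tendsto (fun n => δ n * (Cg + T * Cg') * (Mt : ℝ)) atTop (nhds 0) :=
  stmt_17_general T Mt w hw_meas hw_mem wn hwn_meas hwn_mem δ hδ hdev g hg Cg Cg' hCg hCg'
end

section
/- Let v: [0,T] → {0,1} be piecewise constant with switching times 0 < s₁ < s₂ < ... < s_m < T (i.e., v is constant on each interval between consecutive switching times and changes value at each sᵢ). If consecutive switching times satisfy s_{i+1} − s_i ≥ τ_min for all i, and additionally s₁ ≥ 0, then for every t ∈ (0, T − τ_min), the total variation of v on the open interval (t, t + τ_min) is at most 1, and consequently the dwell-time inequality v(t + τ_min) − v(t) + Var(v; (t, t + τ_min)) ≤ 2 holds for all t ∈ (0, T − τ_min). -/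
/-!
Let `s i` be the last switching time with `s i ≤ t`. The next one, `s (i + 1)`, is the only
candidate inside the window `(t, t + τmin)`: any later one lies at least `τmin` beyond it. So on
the window `v` is either constant or a single step between the two values `0` and `1`; in the
latter case it is monotone or antitone, so its variation is at most the height `1` of the step.
-/

open Set

theorem abs_sub_le_one_of_mem_zero_one {a b : ℝ} (ha : a ∈ ({0, 1} : Set ℝ))
    (hb : b ∈ ({0, 1} : Set ℝ)) : |a - b| ≤ 1 := by
  rcases ha with rfl | rfl <;> rcases hb with rfl | rfl <;> norm_num

theorem eq_or_eq_of_mem_zero_one {a b c : ℝ} (ha : a ∈ ({0, 1} : Set ℝ))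
    (hb : b ∈ ({0, 1} : Set ℝ)) (hc : c ∈ ({0, 1} : Set ℝ)) (hab : a ≠ b) :
    c = a ∨ c = b := by
  rcases ha with rfl | rfl <;> rcases hb with rfl | rfl <;> rcases hc with rfl | rfl <;>
    simp_all

section Variation

variable {α : Type*} [LinearOrder α] {f : α → ℝ} {s : Set α} {a b : ℝ}

theorem MonotoneOn.eVariationOn_le_of_mapsTo (hf : MonotoneOn f s)
    (hmaps : MapsTo f s (Icc a b)) : eVariationOn f s ≤ ENNReal.ofReal (b - a) := by
  rw [eVariationOn.eq_biSup_inter_Icc]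
  refine iSup₂_le fun p ⟨hp₁, hp₂, _⟩ => ?_
  rw [hf.eVariationOn_eq hp₁ hp₂]
  exact ENNReal.ofReal_le_ofReal (sub_le_sub (hmaps hp₂).2 (hmaps hp₁).1)

theorem AntitoneOn.eVariationOn_le_of_mapsTo (hf : AntitoneOn f s)
    (hmaps : MapsTo f s (Icc a b)) : eVariationOn f s ≤ ENNReal.ofReal (b - a) := by
  rw [← eVariationOn.comp_ofDual]
  exact (monotoneOn_comp_ofDual_iff.2 hf).eVariationOn_le_of_mapsTo fun x hx => hmaps hx

theorem eq_or_eq_of_eq_left_of_eq_right {p : α}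
    (hleft : ∀ x ∈ s, x < p → f x = a) (hright : ∀ x ∈ s, p < x → f x = b)
    (hp : f p = a ∨ f p = b) : ∀ x ∈ s, f x = a ∨ f x = b := by
  intro x hx
  rcases lt_trichotomy x p with h | rfl | h
  exacts [.inl (hleft x hx h), hp, .inr (hright x hx h)]

theorem monotoneOn_or_antitoneOn_of_eq_left_of_eq_right {p : α}
    (hleft : ∀ x ∈ s, x < p → f x = a) (hright : ∀ x ∈ s, p < x → f x = b)
    (hp : f p = a ∨ f p = b) : MonotoneOn f s ∨ AntitoneOn f s := by
  have hval := eq_or_eq_of_eq_left_of_eq_right hleft hright hp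
  have hstep : ∀ x ∈ s, ∀ y ∈ s, x ≤ y → f x = a ∨ f y = b := by
    intro x hx y hy hxy
    rcases lt_trichotomy x p with h | rfl | h
    · exact .inl (hleft x hx h)
    · rcases hxy.eq_or_lt with rfl | h
      exacts [hp, .inr (hright y hy h)]
    · exact .inr (hright y hy (h.trans_le hxy))
  rcases le_total a b with hab | hab <;> [left; right] <;>
  · intro x hx y hy hxy
    rcases hstep x hx y hy hxy with h | h <;> rcases hval x hx with h' | h' <;>
      rcases hval y hy with h'' | h'' <;> simp only [h, h', h''] <;> linarith

theorem eVariationOn_le_abs_sub_of_eq_left_of_eq_right {p : α}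
    (hleft : ∀ x ∈ s, x < p → f x = a) (hright : ∀ x ∈ s, p < x → f x = b)
    (hp : f p = a ∨ f p = b) : eVariationOn f s ≤ ENNReal.ofReal |b - a| := by
  have hmaps : MapsTo f s (Icc (min a b) (max a b)) := by
    intro x hx
    rcases eq_or_eq_of_eq_left_of_eq_right hleft hright hp x hx with h | h <;> rw [h]
    exacts [⟨min_le_left a b, le_max_left a b⟩, ⟨min_le_right a b, le_max_right a b⟩]
  rw [← max_sub_min_eq_abs]
  rcases monotoneOn_or_antitoneOn_of_eq_left_of_eq_right hleft hright hp with h | h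
  exacts [h.eVariationOn_le_of_mapsTo hmaps, h.eVariationOn_le_of_mapsTo hmaps]

theorem eVariationOn_le_one_of_eq_left_of_eq_right {p : α} (ha : a ∈ ({0, 1} : Set ℝ))
    (hb : b ∈ ({0, 1} : Set ℝ)) (hab : a ≠ b) (hp : f p ∈ ({0, 1} : Set ℝ))
    (hleft : ∀ x ∈ s, x < p → f x = a) (hright : ∀ x ∈ s, p < x → f x = b) :
    eVariationOn f s ≤ 1 :=
  (eVariationOn_le_abs_sub_of_eq_left_of_eq_right hleft hright
    (eq_or_eq_of_mem_zero_one ha hb hp hab)).trans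
    (ENNReal.ofReal_le_one.2 (abs_sub_le_one_of_mem_zero_one hb ha))

end Variation

theorem exists_cover_or_single_switch_of_gap_ge {s : ℕ → ℝ} {m : ℕ} {t τ : ℝ}
    (h0 : s 0 ≤ t) (hend : t + τ ≤ s (m + 1))
    (hgap : ∀ i, 1 ≤ i → i < m → s (i + 1) - s i ≥ τ) :
    (∃ i ≤ m, s i ≤ t ∧ t + τ ≤ s (i + 1)) ∨
      ∃ i < m, s i ≤ t ∧ s (i + 1) ∈ Ioo t (t + τ) ∧ t + τ ≤ s (i + 2) := by
  set i := Nat.findGreatest (fun k => s k ≤ t) m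
  have him : i ≤ m := Nat.findGreatest_le m
  have hi : s i ≤ t := Nat.findGreatest_spec (P := fun k => s k ≤ t) (Nat.zero_le m) h0
  by_cases hcover : t + τ ≤ s (i + 1)
  · exact .inl ⟨i, him, hi, hcover⟩
  have him' : i < m := by
    rcases him.lt_or_eq with h | h
    · exact h
    · exact absurd (h ▸ hend) hcover
  have hnext : t < s (i + 1) :=
    not_le.1 (Nat.findGreatest_is_greatest (P := fun k => s k ≤ t) (Nat.lt_succ_self i) him')
  refine .inr ⟨i, him', hi, ⟨hnext, not_le.1 hcover⟩, ?_⟩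
  rcases (Nat.succ_le_of_lt him').lt_or_eq with h | h
  · linarith [hgap (i + 1) (Nat.le_add_left 1 i) h]
  · rwa [show i + 2 = m + 1 by omega]

theorem eVariationOn_Ioo_le_one_of_gap_ge {v : ℝ → ℝ} {m : ℕ} {s : ℕ → ℝ} {t τ : ℝ}
    (hval : ∀ x ∈ Ioo t (t + τ), v x ∈ ({0, 1} : Set ℝ)) (h0 : s 0 ≤ t)
    (hend : t + τ ≤ s (m + 1)) (hgap : ∀ i, 1 ≤ i → i < m → s (i + 1) - s i ≥ τ)
    (hconst : ∀ i ≤ m, ∀ x ∈ Ioo (s i) (s (i + 1)), ∀ y ∈ Ioo (s i) (s (i + 1)),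
      v x = v y)
    (hswitch : ∀ i, 1 ≤ i → i ≤ m →
      ∀ x ∈ Ioo (s (i - 1)) (s i), ∀ y ∈ Ioo (s i) (s (i + 1)), v x ≠ v y) :
    eVariationOn v (Ioo t (t + τ)) ≤ 1 := by
  rcases exists_cover_or_single_switch_of_gap_ge h0 hend hgap with
    ⟨i, him, hi, hi'⟩ | ⟨i, him, hi, ⟨hp₁, hp₂⟩, hi'⟩
  · have hsub : Ioo t (t + τ) ⊆ Ioo (s i) (s (i + 1)) := Ioo_subset_Ioo hi hi'
    rw [eVariationOn.constant_on ?_]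
    · exact zero_le
    rintro _ ⟨x, hx, rfl⟩ _ ⟨y, hy, rfl⟩
    exact hconst i him x (hsub hx) y (hsub hy)
  · obtain ⟨x₀, htx₀, hx₀p⟩ := exists_between hp₁
    obtain ⟨y₀, hpy₀, hy₀t⟩ := exists_between hp₂
    have hx₀ : x₀ ∈ Ioo (s i) (s (i + 1)) := ⟨hi.trans_lt htx₀, hx₀p⟩
    have hy₀ : y₀ ∈ Ioo (s (i + 1)) (s (i + 2)) := ⟨hpy₀, hy₀t.trans_le hi'⟩
    refine eVariationOn_le_one_of_eq_left_of_eq_right (p := s (i + 1))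
      (hval x₀ ⟨htx₀, hx₀p.trans hp₂⟩) (hval y₀ ⟨hp₁.trans hpy₀, hy₀t⟩)
      (hswitch (i + 1) (Nat.le_add_left 1 i) him x₀ hx₀ y₀ hy₀) (hval _ ⟨hp₁, hp₂⟩)
      ?_ ?_
    · exact fun x hx hxp => hconst i (Nat.le_of_lt him) x ⟨hi.trans_lt hx.1, hxp⟩ x₀ hx₀
    · exact fun x hx hxp => hconst (i + 1) him x ⟨hxp, hx.2.trans_le hi'⟩ y₀ hy₀

theorem stmt_19_general (T τmin : ℝ) (hτ : 0 < τmin)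
    (v : ℝ → ℝ) (hval : ∀ t ∈ Set.Icc (0 : ℝ) T, v t ∈ ({0, 1} : Set ℝ))
    (m : ℕ) (s : ℕ → ℝ)
    (hs0 : s 0 = 0) (hsend : s (m + 1) = T)
    (hgap : ∀ i, 1 ≤ i → i < m → s (i + 1) - s i ≥ τmin)
    (hconst : ∀ i ≤ m, ∀ x ∈ Set.Ioo (s i) (s (i + 1)), ∀ y ∈ Set.Ioo (s i) (s (i + 1)),
      v x = v y)
    (hswitch : ∀ i, 1 ≤ i → i ≤ m →
      ∀ x ∈ Set.Ioo (s (i - 1)) (s i), ∀ y ∈ Set.Ioo (s i) (s (i + 1)), v x ≠ v y) :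
    ∀ t ∈ Set.Ioo (0 : ℝ) (T - τmin),
      (eVariationOn v (Set.Ioo t (t + τmin))).toReal ≤ 1 ∧
      v (t + τmin) - v t + (eVariationOn v (Set.Ioo t (t + τmin))).toReal ≤ 2 := by
  rintro t ⟨ht0, htT⟩
  have hvar : eVariationOn v (Ioo t (t + τmin)) ≤ 1 :=
    eVariationOn_Ioo_le_one_of_gap_ge
      (fun x hx => hval x ⟨by linarith [hx.1], by linarith [hx.2]⟩)
      (hs0 ▸ ht0.le) (by linarith) hgap hconst hswitch
  have hvar' : (eVariationOn v (Ioo t (t + τmin))).toReal ≤ 1 :=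
    ENNReal.toReal_le_of_le_ofReal zero_le_one (hvar.trans_eq ENNReal.ofReal_one.symm)
  have hjump : v (t + τmin) - v t ≤ 1 :=
    (le_abs_self _).trans (abs_sub_le_one_of_mem_zero_one
      (hval _ ⟨by linarith, by linarith⟩) (hval _ ⟨ht0.le, by linarith⟩))
  exact ⟨hvar', by linarith⟩

/-- converse direction of the dwell-time characterization: if the switching
times of a piecewise constant binary control are at least τ_min apart, then every window
of length τ_min contains variation at most 1 and the dwell-time inequality (8) holds. -/
theorem stmt_19 (T τmin : ℝ) (hT : 0 < T) (hτ : 0 < τmin) (hτT : τmin < T)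
    (v : ℝ → ℝ) (hval : ∀ t ∈ Set.Icc (0 : ℝ) T, v t ∈ ({0, 1} : Set ℝ))
    (m : ℕ) (s : ℕ → ℝ)
    (hs0 : s 0 = 0) (hsend : s (m + 1) = T)
    (hmono : ∀ i ≤ m, s i < s (i + 1))
    (hgap : ∀ i, 1 ≤ i → i < m → s (i + 1) - s i ≥ τmin)
    (hconst : ∀ i ≤ m, ∀ x ∈ Set.Ioo (s i) (s (i + 1)), ∀ y ∈ Set.Ioo (s i) (s (i + 1)),
      v x = v y)
    (hswitch : ∀ i, 1 ≤ i → i ≤ m →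
      ∀ x ∈ Set.Ioo (s (i - 1)) (s i), ∀ y ∈ Set.Ioo (s i) (s (i + 1)), v x ≠ v y) :
    ∀ t ∈ Set.Ioo (0 : ℝ) (T - τmin),
      (eVariationOn v (Set.Ioo t (t + τmin))).toReal ≤ 1 ∧
      v (t + τmin) - v t + (eVariationOn v (Set.Ioo t (t + τmin))).toReal ≤ 2 :=
  stmt_19_general T τmin hτ v hval m s hs0 hsend hgap hconst hswitch
end
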